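/- The discrete semantic entropy of the quantized continuous variable equals the entropy of the block probabilities: if a continuous density p on ℝ is partitioned into intervals Ω_i and H_s(Ũ^Δ) denotes the entropy of the probabilities ∫_{Ω_i} p(u) du, then H_s(Ũ) = -∑_i (∫_{Ω_i} p du) log₂ (∫_{Ω_i} p du) ≥ -∫ p log₂ p du − log₂ S, where S = ∑_i (∫_{Ω_i} p du)·L_i is the average synonymous interval length and L_i = |Ω_i|; i.e., the entropy of the block probabilities is lower-bounded by the differential entropy minus log of the average interval length. -/

import Mathlib

open Finset MeasureTheory

/-!
On each block, Jensen's inequality for the convex function `x ↦ x log x` against the normalised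
Lebesgue measure gives `π_i log (π_i / L_i) ≤ ∫_{Ω_i} p log p`; summing over the blocks bounds
`∑ π_i log π_i - ∑ π_i log L_i` by the integral. Concavity of `log` then gives
`∑ π_i log L_i ≤ log ∑ π_i L_i`.
-/

namespace Real

variable {b : ℝ}

theorem convexOn_mul_logb (hb : 1 ≤ b) : ConvexOn ℝ (Set.Ici 0) fun x => x * logb b x := by
  have h : (fun x => x * logb b x) = fun x => (log b)⁻¹ • (x * log x) := by
    funext x
    rw [logb, smul_eq_mul]
    ring
  exact h ▸ convexOn_mul_log.smul (inv_nonneg.2 (log_nonneg hb))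

theorem concaveOn_logb_Ioi (hb : 1 ≤ b) : ConcaveOn ℝ (Set.Ioi 0) (logb b) := by
  have h : logb b = fun x => (log b)⁻¹ • log x := by
    funext x
    rw [logb, smul_eq_mul, inv_mul_eq_div]
  exact h ▸ strictConcaveOn_log_Ioi.concaveOn.smul (inv_nonneg.2 (log_nonneg hb))

theorem continuous_mul_logb : Continuous fun x => x * logb b x := by
  simpa only [logb, mul_div_assoc] using continuous_mul_log.div_const (log b)

theorem sum_mul_logb_le_logb_sum_mul {ι : Type*} {t : Finset ι} (hb : 1 ≤ b) {w L : ι → ℝ}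
    (hw : ∀ i ∈ t, 0 ≤ w i) (hw₁ : ∑ i ∈ t, w i = 1) (hL : ∀ i ∈ t, 0 < L i) :
    ∑ i ∈ t, w i * logb b (L i) ≤ logb b (∑ i ∈ t, w i * L i) := by
  simpa only [smul_eq_mul] using (concaveOn_logb_Ioi hb).le_map_sum hw hw₁ hL

theorem sum_mul_logb_sub_logb_sum_mul_le {ι : Type*} {t : Finset ι} (hb : 1 ≤ b) {w L : ι → ℝ}
    (hw : ∀ i ∈ t, 0 ≤ w i) (hw₁ : ∑ i ∈ t, w i = 1) (hL : ∀ i ∈ t, 0 < L i) :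
    ∑ i ∈ t, w i * logb b (w i) - logb b (∑ i ∈ t, w i * L i) ≤
      ∑ i ∈ t, w i * logb b (w i / L i) := by
  have hsplit : ∑ i ∈ t, w i * logb b (w i / L i) =
      ∑ i ∈ t, w i * logb b (w i) - ∑ i ∈ t, w i * logb b (L i) := by
    rw [← sum_sub_distrib]
    refine sum_congr rfl fun i hi => ?_
    rcases eq_or_ne (w i) 0 with h | h
    · simp [h]
    · rw [logb_div h (hL i hi).ne', mul_sub]
  linarith [sum_mul_logb_le_logb_sum_mul hb hw hw₁ hL]

end Real

open Real

theorem setIntegral_mul_logb_div_measureReal_le {α : Type*} [MeasurableSpace α] {μ : Measure α}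
    {s : Set α} {b : ℝ} (hb : 1 ≤ b) (h0 : μ s ≠ 0) (hs : μ s ≠ ⊤) {f : α → ℝ}
    (hf : ∀ᵐ x ∂μ.restrict s, 0 ≤ f x) (hfi : IntegrableOn f s μ)
    (hfl : IntegrableOn (fun x => f x * logb b (f x)) s μ) :
    (∫ x in s, f x ∂μ) * logb b ((∫ x in s, f x ∂μ) / μ.real s) ≤
      ∫ x in s, f x * logb b (f x) ∂μ := by
  have hm : 0 < μ.real s := ENNReal.toReal_pos h0 hs
  have hjensen := (convexOn_mul_logb hb).map_set_average_le continuous_mul_logb.continuousOn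
    isClosed_Ici h0 hs hf hfi hfl
  rw [setAverage_eq, setAverage_eq, smul_eq_mul, smul_eq_mul, inv_mul_eq_div, inv_mul_eq_div,
    le_div_iff₀ hm] at hjensen
  calc (∫ x in s, f x ∂μ) * logb b ((∫ x in s, f x ∂μ) / μ.real s)
      = (∫ x in s, f x ∂μ) / μ.real s * logb b ((∫ x in s, f x ∂μ) / μ.real s) * μ.real s := by
        field_simp
    _ ≤ ∫ x in s, f x * logb b (f x) ∂μ := hjensen

theorem quantized_semEntropy_ge_differentialEntropy_sub_log_avg_length
    {I : Type*} [Fintype I] (a b : I → ℝ) (hab : ∀ i, a i < b i)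
    (hdisj : Pairwise (Function.onFun Disjoint (fun i => Set.Ioc (a i) (b i))))
    (p : ℝ → ℝ) (hp : ∀ u, 0 ≤ p u)
    (hprob : ∫ u in (⋃ i, Set.Ioc (a i) (b i)), p u = 1)
    (hint : IntegrableOn p (⋃ i, Set.Ioc (a i) (b i)))
    (hintlog : IntegrableOn (fun u => p u * Real.logb 2 (p u))
      (⋃ i, Set.Ioc (a i) (b i))) :
    -∑ i : I, (∫ u in Set.Ioc (a i) (b i), p u) *
        Real.logb 2 (∫ u in Set.Ioc (a i) (b i), p u) ≥
      (-∫ u in (⋃ i, Set.Ioc (a i) (b i)), p u * Real.logb 2 (p u)) -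
        Real.logb 2 (∑ i : I, (∫ u in Set.Ioc (a i) (b i), p u) * (b i - a i)) := by
  set q : I → ℝ := fun i => ∫ u in Set.Ioc (a i) (b i), p u
  have hΩ : ∀ i, Set.Ioc (a i) (b i) ⊆ ⋃ j, Set.Ioc (a j) (b j) := Set.subset_iUnion _
  have hq₁ : ∑ i, q i = 1 :=
    (integral_iUnion_fintype (fun _ => measurableSet_Ioc) hdisj
      fun i => hint.mono_set (hΩ i)).symm.trans hprob
  have hblock : ∀ i, q i * logb 2 (q i / (b i - a i)) ≤
      ∫ u in Set.Ioc (a i) (b i), p u * logb 2 (p u) := fun i => by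
    simpa only [Real.volume_real_Ioc_of_le (hab i).le] using
      setIntegral_mul_logb_div_measureReal_le one_le_two (by simp [hab i]) (by simp)
        (Filter.Eventually.of_forall hp) (hint.mono_set (hΩ i)) (hintlog.mono_set (hΩ i))
  have hsum := sum_mul_logb_sub_logb_sum_mul_le one_le_two (fun i _ => integral_nonneg hp) hq₁
    fun i _ => sub_pos.2 (hab i)
  rw [integral_iUnion_fintype (fun _ => measurableSet_Ioc) hdisj
    fun i => hintlog.mono_set (hΩ i)]
  linarith [sum_le_sum fun i (_ : i ∈ univ) => hblock i]
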